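/- Let Y₁, …, Y_C be real matrices each with d rows, let Y = [Y₁, …, Y_C] denote their column-wise concatenation, and let T be a real d×d matrix such that the column spaces of the transformed blocks are pairwise orthogonal, i.e., (T Y_i)ᵀ (T Y_j) = 0 for all i ≠ j. Then the objective value ∑_{c=1}^{C} ‖T Y_c‖_* − ‖T Y‖_* equals zero. -/

import Mathlib

/-!
`(T Y)ᵀ (T Y)` is the Gram matrix of the columns of `T Y`, so orthogonality of the blocks makes it
block diagonal with blocks `(T Y_c)ᵀ (T Y_c)`. Its characteristic polynomial is then the product of
theirs, hence its eigenvalues (the squared singular values of `T Y`) are, with multiplicity, the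
union of those of the blocks, and the sums of their square roots agree.
-/

open Matrix

/-- The nuclear norm of a real matrix: the sum of its singular values,
i.e. the square roots of the eigenvalues of `Mᴴ * M`. -/
noncomputable def nuclearNorm {m n : Type*} [Fintype m] [Fintype n] [DecidableEq n]
    (M : Matrix m n ℝ) : ℝ :=
  ∑ i, Real.sqrt ((Matrix.isHermitian_conjTranspose_mul_self M).eigenvalues i)

/-- Column-wise concatenation of a family of matrices `Y c : Matrix (Fin d) (Fin (n c)) ℝ`,
indexed by the sigma type of the column indices. -/
def concatColumns {d C : ℕ} {n : Fin C → ℕ}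
    (Y : ∀ c, Matrix (Fin d) (Fin (n c)) ℝ) :
    Matrix (Fin d) ((c : Fin C) × Fin (n c)) ℝ :=
  Matrix.of fun i p => Y p.1 i p.2

open Polynomial

namespace Matrix

theorem toSquareBlock_blockDiagonal' {R o : Type*} [Zero R] [DecidableEq o] {m' : o → Type*}
    (B : ∀ i, Matrix (m' i) (m' i) R) (i : o) :
    (blockDiagonal' B).toSquareBlock Sigma.fst i =
      reindex (Equiv.sigmaSubtype i).symm (Equiv.sigmaSubtype i).symm (B i) := by
  ext ⟨⟨a, x⟩, ha⟩ ⟨⟨b, y⟩, hb⟩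
  dsimp only at ha hb
  subst ha hb
  simp [toSquareBlock_def, Equiv.sigmaSubtype]

theorem charpoly_blockDiagonal' {R o : Type*} [CommRing R] [Fintype o] [DecidableEq o]
    {m' : o → Type*} [∀ i, Fintype (m' i)] [∀ i, DecidableEq (m' i)]
    (B : ∀ i, Matrix (m' i) (m' i) R) :
    (blockDiagonal' B).charpoly = ∏ i, (B i).charpoly := by
  -- any linear order on the blocks makes a block diagonal matrix block triangular
  let : LinearOrder o := LinearOrder.lift' _ (Fintype.equivFin o).injective
  rw [charpoly, (blockTriangular_blockDiagonal' B).charmatrix.det_fintype]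
  refine Finset.prod_congr rfl fun i _ => ?_
  rw [← charmatrix_toSquareBlock, toSquareBlock_blockDiagonal', ← charpoly, charpoly_reindex]

end Matrix

theorem Polynomial.sum_map_roots_prod {R M ι : Type*} [CommRing R] [IsDomain R]
    [AddCommMonoid M] [Fintype ι] (f : ι → R[X]) (hf : ∀ i, f i ≠ 0) (g : R → M) :
    ((∏ i, f i).roots.map g).sum = ∑ i, ((f i).roots.map g).sum := by
  rw [roots_prod _ _ (Finset.prod_ne_zero_iff.mpr fun i _ => hf i), Multiset.map_bind,
    Multiset.sum_bind]
  rfl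

theorem nuclearNorm_eq_sum_sqrt_roots_charpoly {m n : Type*} [Fintype m] [Fintype n]
    [DecidableEq n] (M : Matrix m n ℝ) :
    nuclearNorm M = ((Mᴴ * M).charpoly.roots.map Real.sqrt).sum := by
  rw [(isHermitian_conjTranspose_mul_self M).roots_charpoly_eq_eigenvalues, Multiset.map_map]
  rfl

section concatColumns

variable {d C : ℕ} {n : Fin C → ℕ}

theorem mul_concatColumns (T : Matrix (Fin d) (Fin d) ℝ) (Y : ∀ c, Matrix (Fin d) (Fin (n c)) ℝ) :
    T * concatColumns Y = concatColumns fun c => T * Y c := by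
  ext i p
  simp [concatColumns, mul_apply]

theorem transpose_mul_concatColumns_self {Y : ∀ c, Matrix (Fin d) (Fin (n c)) ℝ}
    (hY : ∀ i j, i ≠ j → (Y i)ᵀ * Y j = 0) :
    (concatColumns Y)ᵀ * concatColumns Y = blockDiagonal' fun c => (Y c)ᵀ * Y c := by
  ext ⟨a, x⟩ ⟨b, y⟩
  rw [blockDiagonal'_apply']
  split_ifs with hab
  · subst hab
    simp [concatColumns, mul_apply]
  · simpa [concatColumns, mul_apply] using congrFun₂ (hY a b hab) x y

theorem nuclearNorm_concatColumns {Y : ∀ c, Matrix (Fin d) (Fin (n c)) ℝ}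
    (hY : ∀ i j, i ≠ j → (Y i)ᵀ * Y j = 0) :
    nuclearNorm (concatColumns Y) = ∑ c, nuclearNorm (Y c) := by
  simp only [nuclearNorm_eq_sum_sqrt_roots_charpoly, conjTranspose_eq_transpose_of_trivial]
  rw [transpose_mul_concatColumns_self hY, charpoly_blockDiagonal',
    sum_map_roots_prod _ fun c => (charpoly_monic _).ne_zero]

end concatColumns

/-- If the column spaces of the transformed blocks are pairwise orthogonal,
i.e. `(T Y_i)ᵀ (T Y_j) = 0` for `i ≠ j`, then the low-rank transform objective
`∑ c ‖T Y_c‖_* − ‖T Y‖_*` equals zero, where `Y = [Y₁, …, Y_C]`. -/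
theorem lowRankObjective_eq_zero_of_orthogonal {d C : ℕ} {n : Fin C → ℕ}
    (Y : ∀ c, Matrix (Fin d) (Fin (n c)) ℝ) (T : Matrix (Fin d) (Fin d) ℝ)
    (h : ∀ i j, i ≠ j → (T * Y i)ᵀ * (T * Y j) = 0) :
    (∑ c, nuclearNorm (T * Y c)) - nuclearNorm (T * concatColumns Y) = 0 := by
  rw [mul_concatColumns, nuclearNorm_concatColumns h, sub_self]
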